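/- arXiv:0905.3998 — 2 statements merged into one kernel-verified Lean document; each statement's English description precedes it below -/
import Mathlib

section
/- Let X and Y be interfaces and r ⊆ |X| × |Y|. Then r is a seed of X ⊸ Y if and only if for every x ⊆ |X|, ⟨r⟩(P_X(x)) ⊆ P_Y(⟨r⟩(x)), where ⟨r⟩ is the direct image along r. (Linear arrows coincide with forward simulations.) -/
/-- A (monotone) predicate transformer on a set together with its state space:
an *interface*. -/
structure Interface (α : Type*) where
  P : Set α → Set α
  mono : Monotone P

/-- A seed of an interface: a subset `x` with `x ⊆ P x`. -/
def Seed {α : Type*} (X : Interface α) (x : Set α) : Prop := x ⊆ X.P x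

/-- Direct image of a set along a relation. -/
def dimage {α β : Type*} (r : Set (α × β)) (x : Set α) : Set β :=
  {b | ∃ a ∈ x, (a, b) ∈ r}

/-- The dual interface: `P⊥ x = (P xᶜ)ᶜ`. -/
def Interface.dual {α : Type*} (X : Interface α) : Interface α where
  P x := (X.P xᶜ)ᶜ
  mono := fun x y hxy =>
    Set.compl_subset_compl.mpr (X.mono (Set.compl_subset_compl.mpr hxy))

/-- The tensor of two interfaces. -/
def Interface.tensor {α β : Type*} (X : Interface α) (Y : Interface β) :
    Interface (α × β) where
  P r := ⋃ (x : Set α) (y : Set β) (_ : x ×ˢ y ⊆ r), X.P x ×ˢ Y.P y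
  mono := by
    intro r s hrs p hp
    simp only [Set.mem_iUnion] at hp ⊢
    obtain ⟨x, y, hxy, hpx⟩ := hp
    exact ⟨x, y, hxy.trans hrs, hpx⟩

/-- The par of two interfaces: `X ⅋ Y = (X⊥ ⊗ Y⊥)⊥`. -/
def Interface.par {α β : Type*} (X : Interface α) (Y : Interface β) :
    Interface (α × β) :=
  (X.dual.tensor Y.dual).dual

/-- The linear arrow: `X ⊸ Y = X⊥ ⅋ Y`. -/
def Interface.lolli {α β : Type*} (X : Interface α) (Y : Interface β) :
    Interface (α × β) :=
  X.dual.par Y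

/-- The with of two interfaces, on the disjoint sum of the state spaces. -/
def Interface.wth {α β : Type*} (X : Interface α) (Y : Interface β) :
    Interface (α ⊕ β) where
  P z := Sum.inl '' X.P (Sum.inl ⁻¹' z) ∪ Sum.inr '' Y.P (Sum.inr ⁻¹' z)
  mono := by
    intro z w hzw
    exact Set.union_subset_union
      (Set.image_mono (X.mono (Set.preimage_mono hzw)))
      (Set.image_mono (Y.mono (Set.preimage_mono hzw)))

/-- `⋆ᵢ xᵢ` for a multiset of sets: the multisets obtained by picking one element
in each set (up to a bijective pairing). -/
def mstar {α : Type*} (S : Multiset (Set α)) : Set (Multiset α) :=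
  {m | Multiset.Rel (fun a x => a ∈ x) m S}

/-- The exponential `!X`: `[a₁,…,aₙ] ∈ !P(U)` iff there are sets `x₁,…,xₙ` with
`⋆ᵢ xᵢ ⊆ U` and `aᵢ ∈ P xᵢ` for all `i`. -/
def Interface.bang {α : Type*} (X : Interface α) : Interface (Multiset α) where
  P U := {m | ∃ S : Multiset (Set α),
    mstar S ⊆ U ∧ Multiset.Rel (fun a x => a ∈ X.P x) m S}
  mono := by
    intro U V hUV m hm
    obtain ⟨S, hS, hrel⟩ := hm
    exact ⟨S, hS.trans hUV, hrel⟩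

theorem prod_subset_compl_iff_dimage_subset {α β : Type*} {r : Set (α × β)} {x : Set α}
    {y : Set β} : x ×ˢ y ⊆ rᶜ ↔ dimage r x ⊆ yᶜ := by
  constructor
  · rintro h b ⟨a, ha, hab⟩ hb
    exact h ⟨ha, hb⟩ hab
  · rintro h ⟨a, b⟩ ⟨ha, hb⟩ hab
    exact h ⟨a, ha, hab⟩ hb

namespace Interface

variable {α β : Type*} {X : Interface α} {Y : Interface β} {r : Set (α × β)} {p : α × β}

theorem mem_dual_P {x : Set α} {a : α} : a ∈ X.dual.P x ↔ a ∉ X.P xᶜ :=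
  Iff.rfl

theorem mem_tensor_P :
    p ∈ (X.tensor Y).P r ↔ ∃ x y, x ×ˢ y ⊆ r ∧ p.1 ∈ X.P x ∧ p.2 ∈ Y.P y := by
  simp only [tensor, Set.mem_iUnion, Set.mem_prod, exists_prop]

/-- Since `X ⊸ Y = (X⊥⊥ ⊗ Y⊥)⊥`, a tensor witness `x ×ˢ y` disjoint from `r` becomes, with
`z = yᶜ`, a pair `(x, z)` with `⟨r⟩ x ⊆ z`. -/
theorem mem_lolli_P :
    p ∈ (X.lolli Y).P r ↔ ∀ x z, dimage r x ⊆ z → p.1 ∈ X.P x → p.2 ∈ Y.P z := by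
  simp only [lolli, par, mem_dual_P, mem_tensor_P, compl_compl, not_exists, not_and,
    not_not, prod_subset_compl_iff_dimage_subset]
  refine ⟨fun h x z hxz hx => ?_, fun h x y hxy hx => h x yᶜ hxy hx⟩
  simpa using h x zᶜ (by simpa using hxz) hx

theorem mem_lolli_P_iff_forall_mem_P_dimage :
    p ∈ (X.lolli Y).P r ↔ ∀ x, p.1 ∈ X.P x → p.2 ∈ Y.P (dimage r x) := by
  rw [mem_lolli_P]
  exact ⟨fun h x => h x _ le_rfl, fun h x z hxz hx => Y.mono hxz (h x hx)⟩

end Interface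

/-- `r` is a seed of `X ⊸ Y` iff `⟨r⟩` is a forward simulation:
`⟨r⟩ (P_X x) ⊆ P_Y (⟨r⟩ x)` for all `x`. -/
theorem seed_lolli_iff_simulation {α β : Type*} (X : Interface α) (Y : Interface β)
    (r : Set (α × β)) :
    Seed (X.lolli Y) r ↔ ∀ x : Set α, dimage r (X.P x) ⊆ Y.P (dimage r x) := by
  constructor
  · rintro h x b ⟨a, ha, hab⟩
    exact Interface.mem_lolli_P_iff_forall_mem_P_dimage.1 (h hab) x ha
  · rintro h ⟨a, b⟩ hab
    exact Interface.mem_lolli_P_iff_forall_mem_P_dimage.2 fun x ha => h x ⟨a, ha, hab⟩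
end

section
/- Let A and B be interfaces. A relation r ⊆ |A| × |B| is a seed of A ⊸ B if and only if the converse relation r^∼ = {(b,a) | (a,b) ∈ r} is a seed of B⊥ ⊸ A⊥. (The dual is an involutive contravariant functor whose action on morphisms is relational converse.) -/
namespace Interface

variable {α β : Type*}

@[simp]
theorem dual_dual (X : Interface α) : X.dual.dual = X := by
  cases X
  simp only [dual, compl_compl]

theorem dual_P (X : Interface α) (x : Set α) : X.dual.P x = (X.P xᶜ)ᶜ := rfl

theorem lolli_eq_dual_tensor (X : Interface α) (Y : Interface β) :
    X.lolli Y = (X.tensor Y.dual).dual := by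
  rw [lolli, par, dual_dual]

theorem tensor_P_preimage_swap (X : Interface α) (Y : Interface β) (r : Set (α × β)) :
    (Y.tensor X).P (Prod.swap ⁻¹' r) = Prod.swap ⁻¹' (X.tensor Y).P r := by
  ext ⟨b, a⟩
  simp only [tensor, Set.mem_preimage, Prod.swap_prod_mk, Set.mem_iUnion, Set.mem_prod]
  constructor
  · rintro ⟨y, x, hyx, hb, ha⟩
    refine ⟨x, y, ?_, ha, hb⟩
    rwa [← Set.preimage_swap_prod, Prod.swap_surjective.preimage_subset_preimage_iff] at hyx
  · rintro ⟨x, y, hxy, ha, hb⟩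
    refine ⟨y, x, ?_, hb, ha⟩
    rwa [← Set.preimage_swap_prod, Prod.swap_surjective.preimage_subset_preimage_iff]

theorem dual_lolli_dual_P_preimage_swap (A : Interface α) (B : Interface β)
    (r : Set (α × β)) :
    (B.dual.lolli A.dual).P (Prod.swap ⁻¹' r) = Prod.swap ⁻¹' (A.lolli B).P r := by
  rw [lolli_eq_dual_tensor, dual_dual, lolli_eq_dual_tensor, dual_P, dual_P,
    ← Set.preimage_compl, tensor_P_preimage_swap, Set.preimage_compl]

end Interface

/-- `r` is a seed of `A ⊸ B` iff its converse is a seed of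
`B⊥ ⊸ A⊥` (contravariance of the dual). -/
theorem seed_lolli_iff_converse_seed_dual {α β : Type*}
    (A : Interface α) (B : Interface β) (r : Set (α × β)) :
    Seed (A.lolli B) r ↔
      Seed (B.dual.lolli A.dual) {p : β × α | (p.2, p.1) ∈ r} := by
  change r ⊆ _ ↔ Prod.swap ⁻¹' r ⊆ (B.dual.lolli A.dual).P (Prod.swap ⁻¹' r)
  rw [Interface.dual_lolli_dual_P_preimage_swap,
    Prod.swap_surjective.preimage_subset_preimage_iff]
end
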